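/- There do not exist coprime positive integers u < v with v > 1 and coprime positive integers n < m such that 2^(m·u) · n^(n·v) · (m−n)^((m−n)·v) = m^(m·v). Consequently, for rational p ∈ (0,1), p ≠ 1/2, the binary entropy h₂(p) is irrational. -/
import Mathlib


noncomputable def binH (t : ℝ) : ℝ := -(t * Real.logb 2 t) - (1 - t) * Real.logb 2 (1 - t)

lemma binH_eq_binEntropy (t : ℝ) : binH t = Real.binEntropy t / Real.log 2 := by
  simp only [binH, Real.binEntropy, Real.logb, Real.log_inv]
  ring

lemma no_sol : ¬ ∃ u v n m : ℕ, 0 < u ∧ u < v ∧ 1 < v ∧ Nat.Coprime u v ∧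
        0 < n ∧ n < m ∧ Nat.Coprime n m ∧
        2 ^ (m * u) * n ^ (n * v) * (m - n) ^ ((m - n) * v) = m ^ (m * v) := by
  rintro ⟨u, v, n, m, hu, huv, hv, hcuv, hn, hnm, hcnm, heq⟩
  have hm1 : 1 < m := lt_of_le_of_lt hn hnm
  have hm0 : m ≠ 0 := by omega
  have hmn0 : m - n ≠ 0 := by omega
  have hn0 : n ≠ 0 := by omega
  have hcop : Nat.gcd n m = 1 := hcnm
  -- every prime dividing m equals 2
  have hkey : ∀ {d : ℕ}, d.Prime → d ∣ m → d = 2 := by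
    intro d hd hdm
    by_contra hd2
    have h1 : d ∣ 2 ^ (m * u) * n ^ (n * v) * (m - n) ^ ((m - n) * v) := by
      rw [heq]; exact dvd_pow hdm (by positivity)
    rcases (Nat.Prime.dvd_mul hd).mp h1 with h2 | h2
    · rcases (Nat.Prime.dvd_mul hd).mp h2 with h3 | h3
      · have hdvd2 : d ∣ 2 := Nat.Prime.dvd_of_dvd_pow hd h3
        exact hd2 ((Nat.prime_dvd_prime_iff_eq hd Nat.prime_two).mp hdvd2)
      · have hdn : d ∣ n := Nat.Prime.dvd_of_dvd_pow hd h3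
        have hg : d ∣ Nat.gcd n m := Nat.dvd_gcd hdn hdm
        rw [hcop] at hg
        have := Nat.le_of_dvd one_pos hg
        have := hd.two_le
        omega
    · have hdmn : d ∣ m - n := Nat.Prime.dvd_of_dvd_pow hd h2
      have hdn : d ∣ n := by
        have he : n = m - (m - n) := by omega
        rw [he]
        exact Nat.dvd_sub hdm hdmn
      have hg : d ∣ Nat.gcd n m := Nat.dvd_gcd hdn hdm
      rw [hcop] at hg
      have := Nat.le_of_dvd one_pos hg
      have := hd.two_le
      omega
  set k := m.primeFactorsList.length with hk
  have hmpow : m = 2 ^ k := Nat.eq_prime_pow_of_unique_prime_dvd hm0 hkey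
  have hk1 : 1 ≤ k := by
    by_contra h
    have hk0 : k = 0 := by omega
    rw [hk0] at hmpow; simp at hmpow; omega
  have h2m : 2 ∣ m := by rw [hmpow]; exact dvd_pow_self 2 (by omega)
  have hnodd : ¬ 2 ∣ n := by
    intro h
    have hg : 2 ∣ Nat.gcd n m := Nat.dvd_gcd h h2m
    rw [hcop] at hg; omega
  have hmnodd : ¬ 2 ∣ (m - n) := by
    intro h
    apply hnodd
    have he : n = m - (m - n) := by omega
    rw [he]; exact Nat.dvd_sub h2m h
  have hfact : (2 ^ (m*u) * n ^ (n*v) * (m-n) ^ ((m-n)*v)).factorization 2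
      = (m ^ (m*v)).factorization 2 := by rw [heq]
  rw [Nat.factorization_mul (mul_ne_zero (pow_ne_zero _ two_ne_zero) (pow_ne_zero _ hn0))
        (pow_ne_zero _ hmn0),
      Nat.factorization_mul (pow_ne_zero _ two_ne_zero) (pow_ne_zero _ hn0),
      Nat.factorization_pow, Nat.factorization_pow, Nat.factorization_pow,
      Nat.factorization_pow] at hfact
  simp only [Finsupp.coe_add, Finsupp.coe_smul, Pi.add_apply, Pi.smul_apply,
    smul_eq_mul] at hfact
  rw [Nat.factorization_eq_zero_of_not_dvd hnodd,
      Nat.factorization_eq_zero_of_not_dvd hmnodd,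
      Nat.Prime.factorization_self Nat.prime_two] at hfact
  have hm2 : m.factorization 2 = k := by
    rw [hmpow, Nat.Prime.factorization_pow Nat.prime_two]
    simp
  rw [hm2] at hfact
  simp at hfact
  -- hfact : m * u = m * v * k
  have huvk : u = v * k := by
    have h : m * u = m * (v * k) := by rw [hfact]; ring
    exact Nat.eq_of_mul_eq_mul_left (by omega) h
  have : v ≤ u := by
    calc v = v * 1 := (mul_one v).symm
    _ ≤ v * k := Nat.mul_le_mul_left v hk1
    _ = u := huvk.symm
  omega

theorem no_integer_solution_and_binH_irrational :
    (¬ ∃ u v n m : ℕ, 0 < u ∧ u < v ∧ 1 < v ∧ Nat.Coprime u v ∧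
        0 < n ∧ n < m ∧ Nat.Coprime n m ∧
        2 ^ (m * u) * n ^ (n * v) * (m - n) ^ ((m - n) * v) = m ^ (m * v)) ∧
    ∀ p : ℚ, 0 < p → p < 1 → p ≠ 1 / 2 → Irrational (binH (p : ℝ)) := by
  refine ⟨no_sol, ?_⟩
  intro p hp0 hp1 hne
  rintro ⟨q, hq⟩
  -- hq : (q : ℝ) = binH p
  set n : ℕ := p.num.toNat with hn_def
  set m : ℕ := p.den with hm_def
  have hnumpos : 0 < p.num := Rat.num_pos.mpr hp0
  have hncast : (n : ℤ) = p.num := Int.toNat_of_nonneg hnumpos.le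
  have hn : 0 < n := by omega
  have hm0R : (0:ℝ) < m := by exact_mod_cast p.pos
  have hpR : (p : ℝ) = (n : ℝ) / (m : ℝ) := by
    rw [Rat.cast_def]
    congr 1
    exact_mod_cast hncast.symm
  have hp0R : (0:ℝ) < (p:ℝ) := by exact_mod_cast hp0
  have hp1R : (p:ℝ) < 1 := by exact_mod_cast hp1
  have hn0R : (0:ℝ) < n := by exact_mod_cast hn
  have hnm : n < m := by
    have h := hp1R
    rw [hpR, div_lt_one hm0R] at h
    exact_mod_cast h
  have hcnm : Nat.Coprime n m := by
    have hred := p.reduced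
    have he : p.num.natAbs = n := by rw [hn_def]; omega
    rwa [he] at hred
  have hKcast : ((m - n : ℕ) : ℝ) = (m:ℝ) - (n:ℝ) := by
    push_cast [Nat.cast_sub hnm.le]; ring
  have hK0R : (0:ℝ) < ((m - n : ℕ) : ℝ) := by
    rw [hKcast]
    have : (n:ℝ) < m := by exact_mod_cast hnm
    linarith
  have hpneR : (p:ℝ) ≠ 2⁻¹ := by
    intro h
    apply hne
    have : ((p:ℚ):ℝ) = ((1/2 : ℚ):ℝ) := by rw [h]; norm_num
    exact_mod_cast this
  have hlog2 : (0:ℝ) < Real.log 2 := Real.log_pos (by norm_num)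
  have hb0 : 0 < binH (p:ℝ) := by
    rw [binH_eq_binEntropy]
    exact div_pos (Real.binEntropy_pos hp0R hp1R) hlog2
  have hb1 : binH (p:ℝ) < 1 := by
    rw [binH_eq_binEntropy, div_lt_one hlog2]
    exact Real.binEntropy_lt_log_two.mpr hpneR
  have hq0 : 0 < q := by
    have : (0:ℝ) < (q:ℝ) := hq ▸ hb0
    exact_mod_cast this
  have hq1 : q < 1 := by
    have : (q:ℝ) < 1 := hq ▸ hb1
    exact_mod_cast this
  set u : ℕ := q.num.toNat with hu_def
  set v : ℕ := q.den with hv_def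
  have hqnumpos : 0 < q.num := Rat.num_pos.mpr hq0
  have hucast : (u : ℤ) = q.num := Int.toNat_of_nonneg hqnumpos.le
  have hu : 0 < u := by omega
  have hv0R : (0:ℝ) < v := by exact_mod_cast q.pos
  have hqR : (q : ℝ) = (u : ℝ) / (v : ℝ) := by
    rw [Rat.cast_def]
    congr 1
    exact_mod_cast hucast.symm
  have hq1R : (q:ℝ) < 1 := by exact_mod_cast hq1
  have huv : u < v := by
    have h := hq1R
    rw [hqR, div_lt_one hv0R] at h
    exact_mod_cast h
  have hv : 1 < v := by omega
  have hcuv : Nat.Coprime u v := by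
    have hred := q.reduced
    have he : q.num.natAbs = u := by rw [hu_def]; omega
    rwa [he] at hred
  -- key real identity
  set LN := Real.logb 2 (n:ℝ) with hLN
  set LM := Real.logb 2 (m:ℝ) with hLM
  set LK := Real.logb 2 ((m - n : ℕ):ℝ) with hLK
  have hbin : ((m:ℝ) * v) * binH (p:ℝ) =
      (m:ℝ) * v * LM - (n:ℝ) * v * LN - ((m-n:ℕ):ℝ) * v * LK := by
    rw [hpR]
    have h1mp : 1 - (n:ℝ)/(m:ℝ) = ((m-n:ℕ):ℝ)/(m:ℝ) := by
      rw [hKcast]; field_simp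
    unfold binH
    rw [h1mp, Real.logb_div hn0R.ne' hm0R.ne', Real.logb_div hK0R.ne' hm0R.ne']
    rw [hLN, hLM, hLK]
    field_simp
    rw [hKcast]
    ring
  have hmain : (m:ℝ) * u + (n:ℝ) * v * LN + ((m-n:ℕ):ℝ) * v * LK = (m:ℝ) * v * LM := by
    have h2 : ((m:ℝ) * v) * binH (p:ℝ) = (m:ℝ) * u := by
      rw [← hq, hqR]
      field_simp
    rw [h2] at hbin
    linarith
  -- take logb of the product equation
  have hX0 : (0:ℝ) < (2:ℝ) ^ (m*u) * (n:ℝ) ^ (n*v) * ((m-n:ℕ):ℝ) ^ ((m-n)*v) := by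
    positivity
  have hY0 : (0:ℝ) < (m:ℝ) ^ (m*v) := by positivity
  have hlogeq : Real.logb 2 ((2:ℝ) ^ (m*u) * (n:ℝ) ^ (n*v) * ((m-n:ℕ):ℝ) ^ ((m-n)*v))
      = Real.logb 2 ((m:ℝ) ^ (m*v)) := by
    rw [Real.logb_mul (by positivity) (by positivity),
        Real.logb_mul (by positivity) (by positivity),
        Real.logb_pow, Real.logb_pow, Real.logb_pow, Real.logb_pow,
        Real.logb_self_eq_one (by norm_num : (1:ℝ) < 2)]
    rw [← hLN, ← hLM, ← hLK]
    push_cast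
    push_cast at hmain
    linarith
  have hXY : (2:ℝ) ^ (m*u) * (n:ℝ) ^ (n*v) * ((m-n:ℕ):ℝ) ^ ((m-n)*v) = (m:ℝ) ^ (m*v) := by
    have e1 := Real.rpow_logb (by norm_num : (0:ℝ) < 2) (by norm_num) hX0
    have e2 := Real.rpow_logb (by norm_num : (0:ℝ) < 2) (by norm_num) hY0
    rw [← e1, hlogeq, e2]
  have hnat : 2 ^ (m * u) * n ^ (n * v) * (m - n) ^ ((m - n) * v) = m ^ (m * v) := by
    have hc : ((2 ^ (m * u) * n ^ (n * v) * (m - n) ^ ((m - n) * v) : ℕ) : ℝ)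
        = ((m ^ (m * v) : ℕ) : ℝ) := by
      push_cast
      exact hXY
    exact_mod_cast hc
  exact no_sol ⟨u, v, n, m, hu, huv, hv, hcuv, hn, hnm, hcnm, hnat⟩
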